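/- arXiv:2102.05840 — 2 statements merged into one kernel-verified Lean document; each statement's English description precedes it below -/
import Mathlib

section
/- Let X be a separable, complete Heine-Borel metric space (i.e., every closed bounded subset of X is compact), let (ν_n) be a sequence of finite Borel measures on X and ν a finite Borel measure on X. Then (ν_n) converges vaguely to ν if and only if ∫_X f dν_n → ∫_X f dν for every bounded Borel-measurable function f : X → ℝ with bounded support such that the set of points at which f is discontinuous has ν-measure zero. -/
/-!
Vague convergence yields the portmanteau inequalities `limsup ν_n K ≤ μ K` for compact `K` and
`μ U ≤ liminf ν_n U` for open `U`: squeeze a compactly supported Urysohn function between the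
indicators of `K ⊆ U` and use the regularity of `μ`. Hence `ν_n E → μ E` whenever `E` is
relatively compact with `μ`-null frontier. For `0 ≤ f ≤ C` with compact support, the layer-cake
formula writes `∫ f dν_n = ∫_0^C ν_n {f > t} dt`. The frontier of `{f > t}` lies in the
discontinuity set of `f` together with the level set `{f = t}`, and only countably many level
sets carry mass, so the integrands converge for a.e. `t`; dominated convergence concludes. A
general `f` is split into its positive and negative parts. A Heine–Borel space is proper, hence
locally compact, and finite measures on it are regular.
-/

open MeasureTheory Filter Topology Set
open scoped ENNReal

section Frontier

variable {X α : Type*} [TopologicalSpace X] [LinearOrder α] [TopologicalSpace α] [OrderTopology α]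

lemma frontier_setOf_lt_subset (f : X → α) (t : α) :
    frontier {x | t < f x} ⊆ {x | ¬ ContinuousAt f x} ∪ {x | f x = t} := by
  intro x ⟨hx_cl, hx_int⟩
  by_contra hx
  obtain ⟨hcont, hne⟩ := not_or.mp hx
  replace hcont : ContinuousAt f x := not_not.mp hcont
  rcases Ne.lt_or_gt hne with hlt | hgt
  · obtain ⟨y, hy_lt, hy_gt⟩ := mem_closure_iff_nhds.mp hx_cl _
      (hcont.preimage_mem_nhds (Iio_mem_nhds hlt))
    exact lt_asymm hy_lt hy_gt
  · exact hx_int (mem_interior_iff_mem_nhds.mpr (hcont.preimage_mem_nhds (Ioi_mem_nhds hgt)))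

lemma setOf_lt_subset_tsupport {f : X → ℝ} {t : ℝ} (ht : 0 ≤ t) :
    {a | t < f a} ⊆ tsupport f := fun _ ha =>
  subset_tsupport f (ht.trans_lt ha).ne'

end Frontier

section Vague

variable {X : Type*} [TopologicalSpace X] [MeasurableSpace X]

def TendstoVaguely {ι : Type*} (ν : ι → Measure X) (L : Filter ι) (μ : Measure X) : Prop :=
  ∀ f : X → ℝ, Continuous f → HasCompactSupport f →
    Tendsto (fun i => ∫ x, f x ∂(ν i)) L (𝓝 (∫ x, f x ∂μ))

lemma integrable_of_bounded_of_hasCompactSupport [OpensMeasurableSpace X] {m : Measure X}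
    [IsFiniteMeasureOnCompacts m] {f : X → ℝ} (hf : Measurable f) {C : ℝ} (hC : ∀ x, |f x| ≤ C)
    (hfs : HasCompactSupport f) : Integrable f m :=
  (integrableOn_iff_integrable_of_support_subset (subset_tsupport f)).mp
    (Measure.integrableOn_of_bounded hfs.isCompact.measure_lt_top.ne hf.aestronglyMeasurable
      (ae_of_all _ hC))

lemma HasCompactSupport.ae_measure_setOf_eq_eq_zero {μ : Measure X} [IsFiniteMeasureOnCompacts μ]
    {f : X → ℝ} (hf : Measurable f) (hfs : HasCompactSupport f) :
    ∀ᵐ t ∂(volume : Measure ℝ), t ≠ 0 → μ {a | f a = t} = 0 := by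
  have : IsFiniteMeasure (μ.restrict (tsupport f)) :=
    isFiniteMeasure_restrict.mpr hfs.isCompact.measure_lt_top.ne
  filter_upwards [measure_eq_zero_iff_ae_notMem.mp
    ((Measure.countable_meas_level_set_pos (μ := μ.restrict (tsupport f)) hf).measure_zero
      volume)] with t ht ht0
  rw [← Measure.restrict_eq_self μ (s := {a | f a = t})
    fun a (ha : f a = t) => subset_tsupport f (ha.trans_ne ht0)]
  simpa using ht

lemma toReal_measure_setOf_lt_le_indicator {m : Measure X} {f : X → ℝ} {C : ℝ}
    (hfC : ∀ x, f x ≤ C) {B : ℝ≥0∞} (hB : B ≠ ⊤) (hmB : m (tsupport f) ≤ B) {t : ℝ}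
    (ht : 0 < t) : (m {a | t < f a}).toReal ≤ (Ioc 0 C).indicator (fun _ => B.toReal) t := by
  by_cases htC : t ≤ C
  · rw [indicator_of_mem (mem_Ioc.mpr ⟨ht, htC⟩)]
    exact ENNReal.toReal_mono hB ((measure_mono (setOf_lt_subset_tsupport ht.le)).trans hmB)
  · have hempty : {a | t < f a} = ∅ :=
      eq_empty_of_forall_notMem fun a ha => htC (ha.le.trans (hfC a))
    rw [hempty, measure_empty, ENNReal.toReal_zero]
    exact indicator_nonneg (fun _ _ => ENNReal.toReal_nonneg) t

variable [T2Space X] [LocallyCompactSpace X] [BorelSpace X]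

lemma exists_continuous_hasCompactSupport_measure_le_integral_le {K U : Set X}
    (hK : IsCompact K) (hU : IsOpen U) (hKU : K ⊆ U) :
    ∃ g : X → ℝ, Continuous g ∧ HasCompactSupport g ∧
      ∀ (m : Measure X) [IsFiniteMeasureOnCompacts m],
        m K ≤ ENNReal.ofReal (∫ x, g x ∂m) ∧ ENNReal.ofReal (∫ x, g x ∂m) ≤ m U := by
  obtain ⟨g, hgK, hgU, hgs, hg01⟩ := exists_continuous_one_zero_of_isCompact hK
    hU.isClosed_compl (disjoint_compl_right_iff_subset.mpr hKU)
  refine ⟨g, g.continuous, hgs, fun m _ => ?_⟩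
  rw [ofReal_integral_eq_lintegral_ofReal (g.continuous.integrable_of_hasCompactSupport hgs)
    (ae_of_all _ fun x => (hg01 x).1), ← lintegral_indicator_one hK.measurableSet,
    ← lintegral_indicator_one hU.measurableSet]
  constructor <;> refine lintegral_mono fun x => ?_
  · by_cases hx : x ∈ K
    · simp [hx, hgK hx]
    · simp [hx]
  · by_cases hx : x ∈ U
    · simpa [hx] using (hg01 x).2
    · simp [hx, hgU hx]

variable {ι : Type*} {ν : ι → Measure X} {L : Filter ι} {μ : Measure X}
  [∀ i, IsFiniteMeasureOnCompacts (ν i)]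

lemma TendstoVaguely.limsup_measure_le [L.NeBot] [IsFiniteMeasureOnCompacts μ] [μ.OuterRegular]
    (H : TendstoVaguely ν L μ) {K : Set X} (hK : IsCompact K) :
    limsup (fun i => ν i K) L ≤ μ K := by
  rw [K.measure_eq_iInf_isOpen]
  refine le_iInf₂ fun U hKU => le_iInf fun hU => ?_
  obtain ⟨g, hgc, hgs, hg⟩ :=
    exists_continuous_hasCompactSupport_measure_le_integral_le hK hU hKU
  calc limsup (fun i => ν i K) L
      ≤ limsup (fun i => ENNReal.ofReal (∫ x, g x ∂(ν i))) L :=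
        limsup_le_limsup (Eventually.of_forall fun i => (hg (ν i)).1)
    _ = ENNReal.ofReal (∫ x, g x ∂μ) :=
        (ENNReal.continuous_ofReal.tendsto _ |>.comp (H g hgc hgs)).limsup_eq
    _ ≤ μ U := (hg μ).2

lemma TendstoVaguely.le_liminf_measure [L.NeBot] [μ.Regular]
    (H : TendstoVaguely ν L μ) {U : Set X} (hU : IsOpen U) :
    μ U ≤ liminf (fun i => ν i U) L := by
  rw [hU.measure_eq_iSup_isCompact]
  refine iSup₂_le fun K hKU => iSup_le fun hK => ?_
  obtain ⟨g, hgc, hgs, hg⟩ :=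
    exists_continuous_hasCompactSupport_measure_le_integral_le hK hU hKU
  calc μ K ≤ ENNReal.ofReal (∫ x, g x ∂μ) := (hg μ).1
    _ = liminf (fun i => ENNReal.ofReal (∫ x, g x ∂(ν i))) L :=
        (ENNReal.continuous_ofReal.tendsto _ |>.comp (H g hgc hgs)).liminf_eq.symm
    _ ≤ liminf (fun i => ν i U) L :=
        liminf_le_liminf (Eventually.of_forall fun i => (hg (ν i)).2)

lemma TendstoVaguely.tendsto_measure_of_null_frontier [L.NeBot] [μ.Regular]
    (H : TendstoVaguely ν L μ) {E : Set X} (hE : IsCompact (closure E))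
    (hE0 : μ (frontier E) = 0) :
    Tendsto (fun i => ν i E) L (𝓝 (μ E)) :=
  tendsto_measure_of_le_liminf_measure_of_limsup_measure_le interior_subset subset_closure hE0
    (H.le_liminf_measure isOpen_interior) (H.limsup_measure_le hE)

lemma TendstoVaguely.tendsto_measure_setOf_lt [L.NeBot] [μ.Regular]
    (H : TendstoVaguely ν L μ) {f : X → ℝ} (hfs : HasCompactSupport f)
    (hdisc : μ {x | ¬ ContinuousAt f x} = 0) {t : ℝ} (ht : 0 ≤ t)
    (hlevel : μ {a | f a = t} = 0) :
    Tendsto (fun i => ν i {a | t < f a}) L (𝓝 (μ {a | t < f a})) :=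
  H.tendsto_measure_of_null_frontier
    (hfs.isCompact.of_isClosed_subset isClosed_closure
      (closure_minimal (setOf_lt_subset_tsupport ht) (isClosed_tsupport f)))
    (measure_mono_null (frontier_setOf_lt_subset f t) (measure_union_null hdisc hlevel))

lemma TendstoVaguely.tendsto_integral_of_nonneg [L.NeBot] [L.IsCountablyGenerated] [μ.Regular]
    (H : TendstoVaguely ν L μ) {f : X → ℝ} (hf : Measurable f) (hf0 : 0 ≤ f) {C : ℝ}
    (hfC : ∀ x, f x ≤ C) (hfs : HasCompactSupport f)
    (hdisc : μ {x | ¬ ContinuousAt f x} = 0) :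
    Tendsto (fun i => ∫ x, f x ∂(ν i)) L (𝓝 (∫ x, f x ∂μ)) := by
  have layer_cake : ∀ (m : Measure X) [IsFiniteMeasureOnCompacts m],
      ∫ x, f x ∂m = ∫ t in Ioi 0, (m {a | t < f a}).toReal := fun m _ =>
    (integrable_of_bounded_of_hasCompactSupport hf
      (fun x => (abs_of_nonneg (hf0 x)).trans_le (hfC x)) hfs).integral_eq_integral_meas_lt
      (ae_of_all _ hf0)
  have hμK : μ (tsupport f) + 1 ≠ ⊤ :=
    ENNReal.add_ne_top.mpr ⟨hfs.isCompact.measure_lt_top.ne, ENNReal.one_ne_top⟩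
  have hνK : ∀ᶠ i in L, ν i (tsupport f) ≤ μ (tsupport f) + 1 :=
    (eventually_lt_of_limsup_lt ((H.limsup_measure_le hfs.isCompact).trans_lt
      (ENNReal.lt_add_right hfs.isCompact.measure_lt_top.ne one_ne_zero))).mono fun _ => le_of_lt
  let bound := (Ioc 0 C).indicator fun _ => (μ (tsupport f) + 1).toReal
  have hdom : ∀ᶠ i in L, ∀ᵐ t ∂(volume.restrict (Ioi 0)),
      ‖(ν i {a | t < f a}).toReal‖ ≤ bound t := by
    filter_upwards [hνK] with i hi
    filter_upwards [ae_restrict_mem measurableSet_Ioi] with t ht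
    rw [Real.norm_eq_abs, abs_of_nonneg ENNReal.toReal_nonneg]
    exact toReal_measure_setOf_lt_le_indicator hfC hμK hi ht
  have hbound : Integrable bound (volume.restrict (Ioi 0)) :=
    (integrable_indicator_iff measurableSet_Ioc).mpr
      (integrableOn_const ((Measure.restrict_apply_le _ _).trans_lt measure_Ioc_lt_top).ne)
  have hmeas : ∀ i, AEStronglyMeasurable (fun t => (ν i {a | t < f a}).toReal)
      (volume.restrict (Ioi 0)) := fun i =>
    (Antitone.measurable (f := fun t : ℝ => ν i {a | t < f a})
      fun _ _ hst => measure_mono fun _ ha => hst.trans_lt ha).ennreal_toReal.aestronglyMeasurable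
  have hconv : ∀ᵐ t ∂(volume.restrict (Ioi 0)),
      Tendsto (fun i => (ν i {a | t < f a}).toReal) L (𝓝 (μ {a | t < f a}).toReal) := by
    filter_upwards [ae_restrict_mem measurableSet_Ioi,
      ae_restrict_of_ae (hfs.ae_measure_setOf_eq_eq_zero (μ := μ) hf)] with t ht hlevel
    exact (ENNReal.tendsto_toReal (measure_lt_top_of_subset (setOf_lt_subset_tsupport ht.le)
      hfs.isCompact.measure_lt_top.ne).ne).comp
      (H.tendsto_measure_setOf_lt hfs hdisc ht.le (hlevel ht.ne'))
  rw [layer_cake μ]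
  exact (tendsto_integral_filter_of_dominated_convergence _ (Eventually.of_forall hmeas) hdom
    hbound hconv).congr fun i => (layer_cake (ν i)).symm

lemma TendstoVaguely.tendsto_integral [L.NeBot] [L.IsCountablyGenerated] [μ.Regular]
    (H : TendstoVaguely ν L μ) {f : X → ℝ} (hf : Measurable f) {C : ℝ} (hfC : ∀ x, |f x| ≤ C)
    (hfs : HasCompactSupport f) (hdisc : μ {x | ¬ ContinuousAt f x} = 0) :
    Tendsto (fun i => ∫ x, f x ∂(ν i)) L (𝓝 (∫ x, f x ∂μ)) := by
  have hmax_le : ∀ a : ℝ, |a| ≤ C → max a 0 ≤ C := fun a ha =>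
    max_le ((le_abs_self a).trans ha) ((abs_nonneg a).trans ha)
  have hposPart : ∀ g : X → ℝ, Measurable g → (∀ x, |g x| ≤ C) → HasCompactSupport g →
      μ {x | ¬ ContinuousAt g x} = 0 →
      Tendsto (fun i => ∫ x, max (g x) 0 ∂(ν i)) L (𝓝 (∫ x, max (g x) 0 ∂μ)) :=
    fun g hg hgC hgs hgdisc => H.tendsto_integral_of_nonneg (hg.max measurable_const)
      (fun x => le_max_right _ _) (fun x => hmax_le _ (hgC x))
      (hgs.comp_left (g := fun a : ℝ => max a 0) (max_self 0))
      (measure_mono_null (fun x => mt fun hcont : ContinuousAt g x => hcont.max continuousAt_const)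
        hgdisc)
  have hint : ∀ (m : Measure X) [IsFiniteMeasureOnCompacts m] (g : X → ℝ), Measurable g →
      (∀ x, |g x| ≤ C) → HasCompactSupport g → Integrable (fun x => max (g x) 0) m :=
    fun m _ g hg hgC hgs => integrable_of_bounded_of_hasCompactSupport (hg.max measurable_const)
      (fun x => (abs_of_nonneg (le_max_right _ _)).trans_le (hmax_le _ (hgC x)))
      (hgs.comp_left (g := fun a : ℝ => max a 0) (max_self 0))
  have hfC' : ∀ x, |(-f) x| ≤ C := fun x => (abs_neg (f x)).trans_le (hfC x)
  have hsplit : ∀ (m : Measure X) [IsFiniteMeasureOnCompacts m],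
      ∫ x, f x ∂m = ∫ x, max (f x) 0 ∂m - ∫ x, max ((-f) x) 0 ∂m := fun m _ => by
    rw [← integral_sub (hint m f hf hfC hfs) (hint m (-f) hf.neg hfC' hfs.neg)]
    exact integral_congr_ae (ae_of_all _ fun x => (max_zero_sub_max_neg_zero_eq_self (f x)).symm)
  rw [hsplit μ]
  refine ((hposPart f hf hfC hfs hdisc).sub (hposPart (-f) hf.neg hfC' hfs.neg ?_)).congr
    fun i => (hsplit (ν i)).symm
  exact measure_mono_null (fun x => mt fun hcont : ContinuousAt f x => hcont.neg) hdisc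

end Vague

theorem stmt4_general {X : Type*} [MetricSpace X] [MeasurableSpace X] [BorelSpace X]
    (hHB : ∀ s : Set X, IsClosed s → Bornology.IsBounded s → IsCompact s)
    (ν : ℕ → Measure X) (μ : Measure X)
    (hν : ∀ n, IsFiniteMeasure (ν n)) (hμ : IsFiniteMeasure μ) :
    (∀ f : X → ℝ, Continuous f → HasCompactSupport f →
        Tendsto (fun n => ∫ x, f x ∂(ν n)) atTop (𝓝 (∫ x, f x ∂μ)))
      ↔
    (∀ f : X → ℝ, Measurable f → (∃ C : ℝ, ∀ x, |f x| ≤ C) →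
        Bornology.IsBounded (tsupport f) →
        μ {x : X | ¬ ContinuousAt f x} = 0 →
        Tendsto (fun n => ∫ x, f x ∂(ν n)) atTop (𝓝 (∫ x, f x ∂μ))) := by
  have : ProperSpace X := ⟨fun _ _ => hHB _ Metric.isClosed_closedBall Metric.isBounded_closedBall⟩
  refine ⟨fun H f hf ⟨C, hC⟩ hfs hdisc =>
    TendstoVaguely.tendsto_integral H hf hC (hHB _ (isClosed_tsupport f) hfs) hdisc,
    fun H f hf hfs => H f hf.measurable (hf.bounded_above_of_compact_support hfs)
      hfs.isCompact.isBounded (by simp [hf.continuousAt])⟩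

/-- Vague convergence on a separable complete Heine-Borel metric space is equivalent to
convergence of integrals of bounded measurable boundedly supported ν-a.e. continuous
functions. -/
theorem stmt4 {X : Type*} [MetricSpace X] [TopologicalSpace.SeparableSpace X] [CompleteSpace X]
    [MeasurableSpace X] [BorelSpace X]
    (hHB : ∀ s : Set X, IsClosed s → Bornology.IsBounded s → IsCompact s)
    (ν : ℕ → Measure X) (μ : Measure X)
    (hν : ∀ n, IsFiniteMeasure (ν n)) (hμ : IsFiniteMeasure μ) :
    (∀ f : X → ℝ, Continuous f → HasCompactSupport f →
        Tendsto (fun n => ∫ x, f x ∂(ν n)) atTop (𝓝 (∫ x, f x ∂μ)))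
      ↔
    (∀ f : X → ℝ, Measurable f → (∃ C : ℝ, ∀ x, |f x| ≤ C) →
        Bornology.IsBounded (tsupport f) →
        μ {x : X | ¬ ContinuousAt f x} = 0 →
        Tendsto (fun n => ∫ x, f x ∂(ν n)) atTop (𝓝 (∫ x, f x ∂μ))) :=
  stmt4_general hHB ν μ hν hμ
end

section
/- Let X be a metric space, let (ν_n) be a sequence of finite Borel measures on X and ν a finite Borel measure on X. Then the following are equivalent: (I) ν_n converges to ν in total variation; (IV) for every γ ≥ 0, sup over all Borel-measurable f : X → [−γ, γ] of |∫_X f dν_n − ∫_X f dν| tends to 0; (V) for every γ ≥ 0, sup over all Borel-measurable f : X → [−γ, γ] with bounded support of |∫_X f dν_n − ∫_X f dν| tends to 0; (VI) for every γ ≥ 0, sup over all continuous f : X → [−γ, γ] with bounded support of |∫_X f dν_n − ∫_X f dν| tends to 0. -/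
/-!
The only nontrivial implication is (VI) ⇒ (I). For finite measures `ρ, μ` and bounded `f, g`,
`|∫ f dρ - ∫ f dμ|` differs from `|∫ g dρ - ∫ g dμ|` by at most `‖f - g‖` in `L¹(ρ + μ)`. A
measurable `f` with values in `[-1, 1]` is approximated in `L¹(ρ + μ)` by a bounded continuous
function, clamped back into `[-1, 1]`, and then multiplied by a continuous cutoff that equals `1`
on a ball carrying all but `ε` of the mass; so the suprema over both classes agree. The other
implications are inclusions of function classes, and the rescaling `f ↦ f / γ` for (I) ⇒ (IV).
-/

open MeasureTheory Filter Topology Set Metric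

section Discrepancy

variable {X : Type*} [MeasurableSpace X]

/-- `⨆` of a family of reals that is not bounded above is `0`, so the lemmas below only
compare classes of uniformly bounded functions. -/
noncomputable def discrepancy (P : (X → ℝ) → Prop) (ρ μ : Measure X) : ℝ :=
  ⨆ f : {f : X → ℝ // P f}, |∫ x, f.1 x ∂ρ - ∫ x, f.1 x ∂μ|

variable {P Q : (X → ℝ) → Prop} {ρ μ : Measure X}

theorem discrepancy_nonneg : 0 ≤ discrepancy P ρ μ :=
  Real.iSup_nonneg fun _ => abs_nonneg _

theorem abs_integral_sub_le_add_integral_abs_sub {f g : X → ℝ} (hf : Integrable f (ρ + μ))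
    (hg : Integrable g (ρ + μ)) :
    |∫ x, f x ∂ρ - ∫ x, f x ∂μ| ≤ |∫ x, g x ∂ρ - ∫ x, g x ∂μ| + ∫ x, |f x - g x| ∂(ρ + μ) := by
  have hdiff : ∀ ν : Measure X, Integrable f ν → Integrable g ν →
      |∫ x, f x ∂ν - ∫ x, g x ∂ν| ≤ ∫ x, |f x - g x| ∂ν := fun ν hf hg => by
    rw [← integral_sub hf hg]
    exact abs_integral_le_integral_abs
  have hfg : Integrable (fun x => |f x - g x|) (ρ + μ) := (hf.sub hg).abs
  rw [integral_add_measure hfg.left_of_add_measure hfg.right_of_add_measure]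
  have hρ := hdiff ρ hf.left_of_add_measure hg.left_of_add_measure
  have hμ := hdiff μ hf.right_of_add_measure hg.right_of_add_measure
  calc |∫ x, f x ∂ρ - ∫ x, f x ∂μ|
      = |(∫ x, g x ∂ρ - ∫ x, g x ∂μ) + ((∫ x, f x ∂ρ - ∫ x, g x ∂ρ)
          - (∫ x, f x ∂μ - ∫ x, g x ∂μ))| := by ring_nf
    _ ≤ |∫ x, g x ∂ρ - ∫ x, g x ∂μ| + (|∫ x, f x ∂ρ - ∫ x, g x ∂ρ|
          + |∫ x, f x ∂μ - ∫ x, g x ∂μ|) := (abs_add_le _ _).trans (by gcongr; exact abs_sub _ _)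
    _ ≤ _ := by gcongr

variable [IsFiniteMeasure ρ] [IsFiniteMeasure μ]

theorem abs_integral_sub_le_discrepancy {C : ℝ} (hP : ∀ f, P f → ∀ x, f x ∈ Icc (-C) C)
    {f : X → ℝ} (hf : P f) : |∫ x, f x ∂ρ - ∫ x, f x ∂μ| ≤ discrepancy P ρ μ := by
  refine le_ciSup (f := fun f : {f // P f} => |∫ x, f.1 x ∂ρ - ∫ x, f.1 x ∂μ|)
    ⟨C * ρ.real univ + C * μ.real univ, ?_⟩ ⟨f, hf⟩
  rintro _ ⟨⟨g, hg⟩, rfl⟩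
  have hbound : ∀ ν : Measure X, IsFiniteMeasure ν → ‖∫ x, g x ∂ν‖ ≤ C * ν.real univ :=
    fun ν _ => norm_integral_le_of_norm_le_const (f := g)
      (.of_forall fun x => abs_le.2 (hP g hg x))
  exact (norm_sub_le _ _).trans (add_le_add (hbound ρ inferInstance) (hbound μ inferInstance))

theorem discrepancy_le_of_forall_integral_abs_sub_le {C : ℝ}
    (hP : ∀ f, P f → Measurable f ∧ ∀ x, f x ∈ Icc (-C) C)
    (hQ : ∀ g, Q g → Measurable g ∧ ∀ x, g x ∈ Icc (-C) C)
    (happrox : ∀ f, P f → ∀ ε > 0, ∃ g, Q g ∧ ∫ x, |f x - g x| ∂(ρ + μ) ≤ ε) :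
    discrepancy P ρ μ ≤ discrepancy Q ρ μ := by
  have hint : ∀ {f}, Measurable f → (∀ x, f x ∈ Icc (-C) C) → Integrable f (ρ + μ) :=
    fun hm hb => .of_mem_Icc (-C) C hm.aemeasurable (.of_forall hb)
  refine Real.iSup_le (fun ⟨f, hf⟩ => le_of_forall_pos_le_add fun ε hε => ?_) discrepancy_nonneg
  obtain ⟨g, hg, hfg⟩ := happrox f hf ε hε
  calc |∫ x, f x ∂ρ - ∫ x, f x ∂μ|
      ≤ |∫ x, g x ∂ρ - ∫ x, g x ∂μ| + ∫ x, |f x - g x| ∂(ρ + μ) :=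
        abs_integral_sub_le_add_integral_abs_sub (hint (hP f hf).1 (hP f hf).2)
          (hint (hQ g hg).1 (hQ g hg).2)
    _ ≤ discrepancy Q ρ μ + ε :=
        add_le_add (abs_integral_sub_le_discrepancy (fun g hg => (hQ g hg).2) hg) hfg

theorem discrepancy_measurable_Icc_le_mul {γ : ℝ} (hγ : 0 ≤ γ) :
    discrepancy (fun f => Measurable f ∧ ∀ x, f x ∈ Icc (-γ) γ) ρ μ ≤
      γ * discrepancy (fun f => Measurable f ∧ ∀ x, f x ∈ Icc (-1) 1) ρ μ := by
  refine Real.iSup_le (fun ⟨f, hf, hfγ⟩ => ?_) (mul_nonneg hγ discrepancy_nonneg)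
  rcases hγ.eq_or_lt with rfl | hγ
  · have hf0 : f = 0 := funext fun x => by simpa using hfγ x
    simp [hf0]
  have hunit : ∀ x, γ⁻¹ * f x ∈ Icc (-1) 1 := fun x => abs_le.1 <| by
    rw [abs_mul, abs_inv, abs_of_pos hγ]
    exact (inv_mul_le_one₀ hγ).2 (abs_le.2 (hfγ x))
  calc |∫ x, f x ∂ρ - ∫ x, f x ∂μ| = γ * |∫ x, γ⁻¹ * f x ∂ρ - ∫ x, γ⁻¹ * f x ∂μ| := by
        rw [integral_const_mul, integral_const_mul, ← mul_sub, abs_mul, abs_inv, abs_of_pos hγ,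
          mul_inv_cancel_left₀ hγ.ne']
    _ ≤ _ := by
        gcongr
        exact abs_integral_sub_le_discrepancy (fun _ hg => hg.2) ⟨hf.const_mul _, hunit⟩

theorem discrepancy_mono {C : ℝ} (hPQ : ∀ f, P f → Q f)
    (hQ : ∀ g, Q g → Measurable g ∧ ∀ x, g x ∈ Icc (-C) C) :
    discrepancy P ρ μ ≤ discrepancy Q ρ μ :=
  discrepancy_le_of_forall_integral_abs_sub_le (fun f hf => hQ f (hPQ f hf)) hQ
    fun f hf _ hε => ⟨f, hPQ f hf, by simpa using hε.le⟩

end Discrepancy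

section MetricSpace

variable {X : Type*} [PseudoMetricSpace X] [MeasurableSpace X] [BorelSpace X]
  (π : Measure X) [IsFiniteMeasure π]

theorem tendsto_measureReal_compl_closedBall (x₀ : X) :
    Tendsto (fun n : ℕ => π.real (closedBall x₀ n)ᶜ) atTop (𝓝 0) := by
  have hmono : Monotone fun n : ℕ => closedBall x₀ (n : ℝ) :=
    fun _ _ hmn => closedBall_subset_closedBall (Nat.cast_le.2 hmn)
  have h := (ENNReal.tendsto_toReal (measure_ne_top π _)).comp
    (tendsto_measure_iUnion_atTop (μ := π) hmono)
  rw [iUnion_closedBall_nat] at h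
  simp_rw [measureReal_compl measurableSet_closedBall]
  simpa [Measure.real] using h.const_sub (π.real univ)

theorem exists_continuous_mem_Icc_integral_abs_sub_le {a b : ℝ} (hab : a ≤ b) {f : X → ℝ}
    (hf : Measurable f) (hfab : ∀ x, f x ∈ Icc a b) {ε : ℝ} (hε : 0 < ε) :
    ∃ g : X → ℝ, (Continuous g ∧ ∀ x, g x ∈ Icc a b) ∧ ∫ x, |f x - g x| ∂π ≤ ε := by
  have hfi : Integrable f π := .of_mem_Icc a b hf.aemeasurable (.of_forall hfab)
  obtain ⟨g₀, hg₀, hg₀i⟩ := hfi.exists_boundedContinuous_integral_sub_le hε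
  refine ⟨fun x => projIcc a b hab (g₀ x),
    ⟨continuous_subtype_val.comp (continuous_projIcc.comp g₀.continuous),
      fun x => (projIcc a b hab (g₀ x)).2⟩, ?_⟩
  refine (integral_mono_of_nonneg (.of_forall fun x => abs_nonneg _) (hfi.sub hg₀i).norm
    (.of_forall fun x => ?_)).trans hg₀
  calc |f x - projIcc a b hab (g₀ x)|
      = dist (projIcc a b hab (f x)) (projIcc a b hab (g₀ x)) := by
        rw [projIcc_of_mem hab (hfab x)]; rfl
    _ ≤ dist (f x) (g₀ x) := by
        simpa using (LipschitzWith.projIcc hab).dist_le_mul (f x) (g₀ x)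
    _ = ‖f x - g₀ x‖ := dist_eq_norm _ _

theorem exists_isBounded_tsupport_integral_abs_sub_le {γ : ℝ} {g : X → ℝ} (hg : Continuous g)
    (hgγ : ∀ x, g x ∈ Icc (-γ) γ) {ε : ℝ} (hε : 0 < ε) :
    ∃ h : X → ℝ, (Continuous h ∧ Bornology.IsBounded (tsupport h) ∧ ∀ x, h x ∈ Icc (-γ) γ) ∧
      ∫ x, |g x - h x| ∂π ≤ ε := by
  rcases isEmpty_or_nonempty X with hX | ⟨⟨x₀⟩⟩
  · exact ⟨g, ⟨hg, by simp [eq_empty_of_isEmpty], hgγ⟩, by simpa using hε.le⟩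
  obtain ⟨R, hR⟩ : ∃ R : ℕ, γ * π.real (closedBall x₀ R)ᶜ < ε := by
    have h := (tendsto_measureReal_compl_closedBall π x₀).const_mul γ
    rw [mul_zero] at h
    exact (h.eventually (gt_mem_nhds hε)).exists
  obtain ⟨χ, hχ_out, hχ_in, hχ01⟩ := exists_continuous_zero_one_of_isClosed
    (isOpen_ball (x := x₀) (ε := R + 1)).isClosed_compl isClosed_closedBall
    (disjoint_compl_left_iff_subset.2 (closedBall_subset_ball (lt_add_one (R : ℝ))))
  have hgabs : ∀ x, |g x| ≤ γ := fun x => abs_le.2 (hgγ x)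
  refine ⟨fun x => g x * χ x, ⟨hg.mul χ.continuous, ?_, fun x => abs_le.1 ?_⟩, ?_⟩
  · refine (isBounded_ball (x := x₀) (r := R + 1)).closure.subset (closure_mono fun x hx => ?_)
    by_contra hx'
    exact hx (by simp [hχ_out hx'])
  · rw [abs_mul, abs_of_nonneg (hχ01 x).1]
    exact (mul_le_of_le_one_right (abs_nonneg _) (hχ01 x).2).trans (hgabs x)
  · set T := (closedBall x₀ (R : ℝ))ᶜ
    have hT : MeasurableSet T := measurableSet_closedBall.compl
    have hpt : ∀ x, |g x - g x * χ x| ≤ T.indicator (fun _ => γ) x := by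
      intro x
      by_cases hx : x ∈ closedBall x₀ (R : ℝ)
      · simp [T, hx, hχ_in hx]
      · rw [indicator_of_mem hx, ← mul_one_sub, abs_mul,
          abs_of_nonneg (sub_nonneg.2 (hχ01 x).2)]
        exact (mul_le_of_le_one_right (abs_nonneg _) (by linarith [(hχ01 x).1])).trans (hgabs x)
    calc ∫ x, |g x - g x * χ x| ∂π ≤ ∫ x, T.indicator (fun _ => γ) x ∂π :=
          integral_mono_of_nonneg (.of_forall fun _ => abs_nonneg _)
            ((integrable_const γ).indicator hT) (.of_forall hpt)
      _ = γ * π.real T := by rw [integral_indicator_const _ hT, smul_eq_mul, mul_comm]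
      _ ≤ ε := hR.le

theorem discrepancy_measurable_le_continuous_isBounded_tsupport {ρ μ : Measure X}
    [IsFiniteMeasure ρ] [IsFiniteMeasure μ] {γ : ℝ} (hγ : 0 ≤ γ) :
    discrepancy (fun f => Measurable f ∧ ∀ x, f x ∈ Icc (-γ) γ) ρ μ ≤
      discrepancy (fun f => Continuous f ∧ Bornology.IsBounded (tsupport f) ∧
        ∀ x, f x ∈ Icc (-γ) γ) ρ μ :=
  calc _ ≤ discrepancy (fun f => Continuous f ∧ ∀ x, f x ∈ Icc (-γ) γ) ρ μ :=
        discrepancy_le_of_forall_integral_abs_sub_le (fun _ hf => hf)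
          (fun _ hg => ⟨hg.1.measurable, hg.2⟩) fun _ hf _ hε =>
            exists_continuous_mem_Icc_integral_abs_sub_le (ρ + μ) (by linarith) hf.1 hf.2 hε
    _ ≤ _ :=
        discrepancy_le_of_forall_integral_abs_sub_le (fun _ hg => ⟨hg.1.measurable, hg.2⟩)
          (fun _ hh => ⟨hh.1.measurable, hh.2.2⟩) fun _ hg _ hε =>
            exists_isBounded_tsupport_integral_abs_sub_le (ρ + μ) hg.1 hg.2 hε

end MetricSpace

/-- On a metric space, total-variation convergence of finite Borel measures is equivalent to
the corresponding uniform convergence over measurable functions bounded by γ, over measurable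
functions bounded by γ with bounded support, and over continuous functions bounded by γ with
bounded support, for every γ ≥ 0. -/
theorem stmt18 {X : Type*} [MetricSpace X] [MeasurableSpace X] [BorelSpace X]
    (ν : ℕ → Measure X) (μ : Measure X)
    (hν : ∀ n, IsFiniteMeasure (ν n)) (hμ : IsFiniteMeasure μ) :
    List.TFAE
      [Tendsto (fun n => ⨆ f : {f : X → ℝ // Measurable f ∧ ∀ x, f x ∈ Set.Icc (-1 : ℝ) 1},
          |∫ x, f.1 x ∂(ν n) - ∫ x, f.1 x ∂μ|) atTop (𝓝 0),
       ∀ γ : ℝ, 0 ≤ γ →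
        Tendsto (fun n => ⨆ f : {f : X → ℝ // Measurable f ∧ ∀ x, f x ∈ Set.Icc (-γ) γ},
          |∫ x, f.1 x ∂(ν n) - ∫ x, f.1 x ∂μ|) atTop (𝓝 0),
       ∀ γ : ℝ, 0 ≤ γ →
        Tendsto (fun n => ⨆ f : {f : X → ℝ // Measurable f ∧
            Bornology.IsBounded (tsupport f) ∧ ∀ x, f x ∈ Set.Icc (-γ) γ},
          |∫ x, f.1 x ∂(ν n) - ∫ x, f.1 x ∂μ|) atTop (𝓝 0),
       ∀ γ : ℝ, 0 ≤ γ →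
        Tendsto (fun n => ⨆ f : {f : X → ℝ // Continuous f ∧
            Bornology.IsBounded (tsupport f) ∧ ∀ x, f x ∈ Set.Icc (-γ) γ},
          |∫ x, f.1 x ∂(ν n) - ∫ x, f.1 x ∂μ|) atTop (𝓝 0)] := by
  tfae_have 1 → 2 := fun h γ hγ => squeeze_zero (fun _ => discrepancy_nonneg)
    (fun _ => discrepancy_measurable_Icc_le_mul hγ) (by rw [← mul_zero γ]; exact h.const_mul γ)
  tfae_have 2 → 3 := fun h γ hγ => squeeze_zero (fun _ => discrepancy_nonneg)
    (fun _ => discrepancy_mono (fun _ hf => ⟨hf.1, hf.2.2⟩) fun _ hf => hf) (h γ hγ)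
  tfae_have 3 → 4 := fun h γ hγ => squeeze_zero (fun _ => discrepancy_nonneg)
    (fun _ => discrepancy_mono (fun _ hf => ⟨hf.1.measurable, hf.2⟩) fun _ hf => ⟨hf.1, hf.2.2⟩)
    (h γ hγ)
  tfae_have 4 → 1 := fun h => squeeze_zero (fun _ => discrepancy_nonneg)
    (fun _ => discrepancy_measurable_le_continuous_isBounded_tsupport zero_le_one) (h 1 zero_le_one)
  tfae_finish
end
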